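/- If F satisfies condition (C4), then Δ is a subgroup of Γ: it contains the identity permutation and is closed under composition and under taking inverses. -/
import Mathlib


/-- Action of a permutation of `Fin n` on vectors `x : Fin n → ℝ`:
`(γ • x) i = x (γ⁻¹ i)`. -/
def pact {n : ℕ} (γ : Equiv.Perm (Fin n)) (x : Fin n → ℝ) : Fin n → ℝ :=
  fun i => x (γ⁻¹ i)

/-- Lexicographic order `u ⪰ v` on `Fin m → ℝ`. -/
def lexGe {m : ℕ} (u v : Fin m → ℝ) : Prop :=
  u = v ∨ ∃ k : Fin m, (∀ i : Fin m, i < k → u i = v i) ∧ v k < u k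

/-- The set `W` of solutions respecting the symmetry handling constraints
`σ(x) ⪰ σ(δ • x)` for all `δ ∈ Γ`, where `σ(x) = x ∘ τ`. -/
def Wset (n m : ℕ) (Γ : Subgroup (Equiv.Perm (Fin n))) (τ : Fin m → Fin n) :
    Set (Fin n → ℝ) :=
  {x | ∀ δ ∈ Γ, lexGe (x ∘ τ) (pact δ x ∘ τ)}

/-- The set `Δ = { γ ∈ Γ | ∀ x ∈ F ∩ W, ∀ k, σ(x) k ≤ σ(γ • x) k }`. -/
def Dset (n m : ℕ) (Γ : Subgroup (Equiv.Perm (Fin n))) (τ : Fin m → Fin n)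
    (F : Set (Fin n → ℝ)) : Set (Equiv.Perm (Fin n)) :=
  {γ | γ ∈ Γ ∧ ∀ x ∈ F ∩ Wset n m Γ τ, ∀ k : Fin m, (x ∘ τ) k ≤ (pact γ x ∘ τ) k}

/-- Condition (C4): for every `x ∈ F` and `ξ ∈ Γ` with `σ(x) = σ(ξ • x)`,
also `ξ • x ∈ F`. -/
def condC4 (n m : ℕ) (Γ : Subgroup (Equiv.Perm (Fin n))) (τ : Fin m → Fin n)
    (F : Set (Fin n → ℝ)) : Prop :=
  ∀ x ∈ F, ∀ ξ ∈ Γ, x ∘ τ = pact ξ x ∘ τ → pact ξ x ∈ F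


lemma pact_mul' {n : ℕ} (γ₁ γ₂ : Equiv.Perm (Fin n)) (x : Fin n → ℝ) :
    pact (γ₁ * γ₂) x = pact γ₁ (pact γ₂ x) := by
  funext i; simp [pact, mul_inv_rev]

lemma lexGe_eq' {m : ℕ} {u v : Fin m → ℝ} (h : lexGe u v) (hle : ∀ k, u k ≤ v k) :
    u = v := by
  rcases h with h | ⟨k, _, hk⟩
  · exact h
  · exact absurd (hle k) (not_le.mpr hk)

lemma dstep {n m : ℕ} {Γ : Subgroup (Equiv.Perm (Fin n))} {τ : Fin m → Fin n}
    {F : Set (Fin n → ℝ)} (hC4 : condC4 n m Γ τ F)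
    {γ : Equiv.Perm (Fin n)} (hγ : γ ∈ Dset n m Γ τ F)
    {x : Fin n → ℝ} (hx : x ∈ F ∩ Wset n m Γ τ) :
    pact γ x ∈ F ∩ Wset n m Γ τ ∧ pact γ x ∘ τ = x ∘ τ := by
  obtain ⟨hγΓ, hle⟩ := hγ
  have heq : x ∘ τ = pact γ x ∘ τ :=
    lexGe_eq' (hx.2 γ hγΓ) (fun k => hle x hx k)
  refine ⟨⟨hC4 x hx.1 γ hγΓ heq, fun δ hδ => ?_⟩, heq.symm⟩
  rw [← pact_mul', ← heq]
  exact hx.2 (δ * γ) (mul_mem hδ hγΓ)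

lemma dpow {n m : ℕ} {Γ : Subgroup (Equiv.Perm (Fin n))} {τ : Fin m → Fin n}
    {F : Set (Fin n → ℝ)} (hC4 : condC4 n m Γ τ F)
    {γ : Equiv.Perm (Fin n)} (hγ : γ ∈ Dset n m Γ τ F)
    {x : Fin n → ℝ} (hx : x ∈ F ∩ Wset n m Γ τ) (j : ℕ) :
    pact (γ ^ j) x ∈ F ∩ Wset n m Γ τ ∧ pact (γ ^ j) x ∘ τ = x ∘ τ := by
  induction j with
  | zero => exact ⟨hx, rfl⟩
  | succ j ih =>
    rw [pow_succ', pact_mul']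
    obtain ⟨h1, h2⟩ := dstep hC4 hγ ih.1
    exact ⟨h1, h2.trans ih.2⟩

/-- If `F` satisfies (C4), then `Δ` is a subgroup of `Γ`. -/
theorem stmt9 (n m : ℕ) (Γ : Subgroup (Equiv.Perm (Fin n)))
    (τ : Fin m → Fin n) (hτ : Function.Injective τ)
    (F : Set (Fin n → ℝ)) (hC4 : condC4 n m Γ τ F) :
    (∀ γ ∈ Dset n m Γ τ F, γ ∈ Γ) ∧
    (1 : Equiv.Perm (Fin n)) ∈ Dset n m Γ τ F ∧
    (∀ γ₁ ∈ Dset n m Γ τ F, ∀ γ₂ ∈ Dset n m Γ τ F, γ₁ * γ₂ ∈ Dset n m Γ τ F) ∧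
    (∀ γ ∈ Dset n m Γ τ F, γ⁻¹ ∈ Dset n m Γ τ F) := by
  refine ⟨fun γ hγ => hγ.1, ⟨Γ.one_mem, fun x hx k => le_of_eq rfl⟩, ?_, ?_⟩
  · rintro γ₁ hγ₁ γ₂ hγ₂
    refine ⟨mul_mem hγ₁.1 hγ₂.1, fun x hx k => ?_⟩
    obtain ⟨hy, heq⟩ := dstep hC4 hγ₂ hx
    have := hγ₁.2 _ hy k
    rw [pact_mul']
    calc (x ∘ τ) k = (pact γ₂ x ∘ τ) k := (congrFun heq k).symm
    _ ≤ (pact γ₁ (pact γ₂ x) ∘ τ) k := this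
  · rintro γ hγ
    refine ⟨inv_mem hγ.1, fun x hx k => ?_⟩
    have hmul : γ * γ ^ (orderOf γ - 1) = 1 := by
      rw [← pow_succ', Nat.sub_add_cancel (orderOf_pos γ), pow_orderOf_eq_one]
    have hinv : γ⁻¹ = γ ^ (orderOf γ - 1) := (eq_inv_of_mul_eq_one_right hmul).symm
    rw [hinv]
    exact le_of_eq (congrFun (dpow hC4 hγ hx _).2 k).symm
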